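/- arXiv:2501.19105 — 3 statements merged into one kernel-verified Lean document; each statement's English description precedes it below -/
import Mathlib

section
/- Let X be a random variable with finite support 𝒳, and let 𝓕 be a set of functions 𝒳 → ▵^{c−1} such that ρ_i := E[sup_{f ∈ 𝓕} 1/f_i(X)] < ∞ for every i ∈ {1,…,c}, where f_c := 1 − Σ_{i=1}^{c−1} f_i. Let ψ: ▵^{c−1} → ℝ be the negative Shannon entropy and define the functional Ψ[f] := E[ψ(f(X))] on functions 𝒳 → ▵^{c−1}, restricted to the convex hull of 𝓕. Then for every k ∈ ℕ, Gap(k; Ψ|_{co 𝓕}) ≤ (1/(8k))·Σ_{i=1}^c ρ_i. -/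
open Real

/-- The reduced open simplex `▵^{c−1} = {p ∈ (0,1)^{c−1} : Σ p_i < 1}`. -/
def redSimplex (c : ℕ) : Set (Fin (c - 1) → ℝ) :=
  {p | (∀ i, p i ∈ Set.Ioo (0:ℝ) 1) ∧ ∑ i, p i < 1}

/-- Extension of `p ∈ ▵^{c−1}` to a probability vector on `c` classes via the residual
coordinate `p_c := 1 − Σ_{i<c−1} p_i`. -/
noncomputable def extendProb (c : ℕ) (p : Fin (c - 1) → ℝ) : Fin c → ℝ :=
  fun i => if h : (i : ℕ) < c - 1 then p ⟨i, h⟩ else 1 - ∑ j, p j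

/-- Negative Shannon entropy on `▵^{c−1}`. -/
noncomputable def negEnt (c : ℕ) (p : Fin (c - 1) → ℝ) : ℝ :=
  ∑ i, p i * Real.log (p i) + (1 - ∑ i, p i) * Real.log (1 - ∑ i, p i)

/-- The Jensen approximation gap `Gap(n; φ)` of a function `φ` with domain `D`. -/
noncomputable def jensenGap {V : Type*} [AddCommGroup V] [Module ℝ V]
    (n : ℕ) (D : Set V) (φ : V → ℝ) : ℝ :=
  sSup {gap : ℝ | ∃ (m : ℕ) (w : Fin m → ℝ) (z : Fin m → V),
    (∀ i, 0 ≤ w i) ∧ ∑ i, w i = 1 ∧ (∀ i, z i ∈ D) ∧ (∑ i, w i • z i) ∈ D ∧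
    gap = (∑ t : Fin n → Fin m, (∏ j, w (t j)) * φ ((n : ℝ)⁻¹ • ∑ j, z (t j)))
      - φ (∑ i, w i • z i)}


section AuxJensenGap

open Finset

private lemma log_le_one' (t : ℝ) (ht : 1 ≤ t) : Real.log t ≤ (t - t⁻¹) / 2 := by
  have key : ∀ u : ℝ, u ≠ 0 →
      HasDerivAt (fun v : ℝ => (v - v⁻¹) / 2 - Real.log v)
        ((1 - -(u ^ 2)⁻¹) / 2 - u⁻¹) u := by
    intro u hu
    exact (((hasDerivAt_id u).sub (hasDerivAt_inv hu)).div_const 2).sub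
      (Real.hasDerivAt_log hu)
  have hmono : MonotoneOn (fun v : ℝ => (v - v⁻¹) / 2 - Real.log v) (Set.Ici 1) := by
    apply monotoneOn_of_deriv_nonneg (convex_Ici 1)
    · intro u hu
      have hu0 : u ≠ 0 := by simp at hu; positivity
      exact (key u hu0).continuousAt.continuousWithinAt
    · intro u hu
      rw [interior_Ici] at hu
      have hu0 : u ≠ 0 := by simp at hu; positivity
      exact ((key u hu0).differentiableAt).differentiableWithinAt
    · intro u hu
      rw [interior_Ici] at hu
      have hu1 : (1:ℝ) < u := hu
      have hu0 : u ≠ 0 := by positivity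
      rw [(key u hu0).deriv]
      have : (1 - -(u ^ 2)⁻¹) / 2 - u⁻¹ = (u - 1)^2 / (2 * u^2) := by
        field_simp; ring
      rw [this]; positivity
  have h := hmono (Set.self_mem_Ici) (a := 1) ht ht
  simp at h
  linarith

private lemma log_le_two' (t : ℝ) (h0 : 0 < t) (h1 : t ≤ 1) :
    Real.log t ≤ 3 / 2 - 2 * t⁻¹ + (t⁻¹) ^ 2 / 2 := by
  have key : ∀ u : ℝ, u ≠ 0 →
      HasDerivAt (fun v : ℝ => 3 / 2 - 2 * v⁻¹ + (v⁻¹) ^ 2 / 2 - Real.log v)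
        ((0 - 2 * -(u ^ 2)⁻¹) + (2 * u⁻¹ ^ (2-1) * -(u ^ 2)⁻¹) / 2 - u⁻¹) u := by
    intro u hu
    exact (((hasDerivAt_const u (3/2 : ℝ)).sub ((hasDerivAt_inv hu).const_mul 2)).add
      (((hasDerivAt_inv hu).pow 2).div_const 2)).sub (Real.hasDerivAt_log hu)
  have hanti : AntitoneOn (fun v : ℝ => 3 / 2 - 2 * v⁻¹ + (v⁻¹) ^ 2 / 2 - Real.log v)
      (Set.Ioc 0 1) := by
    apply antitoneOn_of_deriv_nonpos (convex_Ioc 0 1)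
    · intro u hu
      exact (key u (ne_of_gt hu.1)).continuousAt.continuousWithinAt
    · intro u hu
      rw [interior_Ioc] at hu
      exact ((key u (ne_of_gt hu.1)).differentiableAt).differentiableWithinAt
    · intro u hu
      rw [interior_Ioc] at hu
      have hu0 : (0:ℝ) < u := hu.1
      rw [(key u (ne_of_gt hu0)).deriv]
      have : (0 - 2 * -(u ^ 2)⁻¹) + (2 * u⁻¹ ^ (2-1) * -(u ^ 2)⁻¹) / 2 - u⁻¹
          = -((u - 1)^2 / u^3) := by
        field_simp; ring_nf; rw [mul_inv_cancel₀ (ne_of_gt hu0)]; ring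
      rw [this]
      simp only [neg_nonpos]
      positivity
  have h := hanti (Set.mem_Ioc.2 ⟨h0, h1⟩) (Set.mem_Ioc.2 ⟨zero_lt_one, le_refl 1⟩) h1
  simp [← inv_pow] at h
  linarith

private lemma bregman_le' (a b M : ℝ) (ha : 0 < a) (hb : 0 < b)
    (haM : 1 ≤ a * M) (hbM : 1 ≤ b * M) :
    a * Real.log a - a * Real.log b - (a - b) ≤ M / 2 * (a - b) ^ 2 := by
  have hlog : a * Real.log a - a * Real.log b = a * Real.log (a / b) := by
    rw [Real.log_div ha.ne' hb.ne']; ring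
  rw [hlog]
  rcases le_total b a with hba | hab
  · have ht : 1 ≤ a / b := (one_le_div hb).2 hba
    have h1 := log_le_one' (a / b) ht
    rw [inv_div] at h1
    have h2 : a * Real.log (a / b) ≤ a * ((a / b - b / a) / 2) :=
      mul_le_mul_of_nonneg_left h1 ha.le
    have h3 : a * ((a / b - b / a) / 2) - (a - b) = (a - b) ^ 2 / (2 * b) := by
      field_simp; ring
    have h4 : (a - b) ^ 2 / (2 * b) ≤ M / 2 * (a - b) ^ 2 := by
      rw [div_le_iff₀ (by positivity)]
      nlinarith [mul_nonneg (sub_nonneg.2 hbM) (sq_nonneg (a - b))]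
    linarith
  · have ht0 : 0 < a / b := by positivity
    have ht1 : a / b ≤ 1 := (div_le_one hb).2 hab
    have h1 := log_le_two' (a / b) ht0 ht1
    rw [inv_div] at h1
    have h2 : a * Real.log (a / b) ≤ a * (3 / 2 - 2 * (b / a) + (b / a) ^ 2 / 2) :=
      mul_le_mul_of_nonneg_left h1 ha.le
    have h3 : a * (3 / 2 - 2 * (b / a) + (b / a) ^ 2 / 2) - (a - b)
        = (a - b) ^ 2 / (2 * a) := by
      field_simp; ring
    have h4 : (a - b) ^ 2 / (2 * a) ≤ M / 2 * (a - b) ^ 2 := by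
      rw [div_le_iff₀ (by positivity)]
      nlinarith [mul_nonneg (sub_nonneg.2 haM) (sq_nonneg (a - b))]
    linarith

private lemma indep_one {m k : ℕ} (w r : Fin m → ℝ) (hwr : ∑ l, w l * r l = 0) (j : Fin k) :
    ∑ t : Fin k → Fin m, (∏ l, w (t l)) * r (t j) = 0 := by
  have h1 : ∀ t : Fin k → Fin m,
      (∏ l, w (t l)) * r (t j) = ∏ l, (w (t l) * (if l = j then r (t l) else 1)) := by
    intro t
    rw [Finset.prod_mul_distrib, Finset.prod_ite_eq' univ j (fun l => r (t l)),
      if_pos (mem_univ j)]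
  simp only [h1]
  have h2 := Finset.prod_univ_sum (fun _ : Fin k => (univ : Finset (Fin m)))
    (fun l u => w u * (if l = j then r u else 1))
  rw [Fintype.piFinset_univ] at h2
  rw [← h2]
  apply Finset.prod_eq_zero (mem_univ j)
  simp [hwr]

private lemma indep_two {m k : ℕ} (w r : Fin m → ℝ) (hw1 : ∑ l, w l = 1)
    (hwr : ∑ l, w l * r l = 0) :
    ∑ t : Fin k → Fin m, (∏ l, w (t l)) * (∑ j, r (t j)) ^ 2
      = k * ∑ l, w l * r l ^ 2 := by
  have expand : ∀ t : Fin k → Fin m,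
      (∏ l, w (t l)) * (∑ j, r (t j)) ^ 2
        = ∑ j : Fin k, ∑ j' : Fin k, (∏ l, w (t l)) * (r (t j) * r (t j')) := by
    intro t
    rw [sq, Finset.sum_mul_sum, Finset.mul_sum]
    congr 1; funext j
    rw [Finset.mul_sum]
  simp only [expand]
  rw [Finset.sum_comm]
  rw [Finset.sum_congr rfl (fun (j : Fin k) _ => Finset.sum_comm)]
  have inner : ∀ j j' : Fin k,
      ∑ t : Fin k → Fin m, (∏ l, w (t l)) * (r (t j) * r (t j'))
        = if j = j' then ∑ l, w l * r l ^ 2 else 0 := by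
    intro j j'
    have h1 : ∀ t : Fin k → Fin m,
        (∏ l, w (t l)) * (r (t j) * r (t j'))
          = ∏ l, (w (t l) * ((if l = j then r (t l) else 1) * (if l = j' then r (t l) else 1))) := by
      intro t
      rw [Finset.prod_mul_distrib, Finset.prod_mul_distrib,
        Finset.prod_ite_eq' univ j (fun l => r (t l)),
        Finset.prod_ite_eq' univ j' (fun l => r (t l)),
        if_pos (mem_univ j), if_pos (mem_univ j')]
    simp only [h1]
    have h2 := Finset.prod_univ_sum (fun _ : Fin k => (univ : Finset (Fin m)))
      (fun l u => w u * ((if l = j then r u else 1) * (if l = j' then r u else 1)))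
    rw [Fintype.piFinset_univ] at h2
    rw [← h2]
    by_cases hjj : j = j'
    · subst hjj
      rw [if_pos rfl]
      have h3 : ∀ l : Fin k, (∑ u, w u * ((if l = j then r u else 1) * (if l = j then r u else 1)))
          = if l = j then ∑ u, w u * r u ^ 2 else 1 := by
        intro l
        by_cases hl : l = j
        · simp only [if_pos hl]
          congr 1; funext u; ring
        · simp [hl, hw1]
      simp only [h3]
      rw [Finset.prod_ite_eq' univ j (fun _ => ∑ u, w u * r u ^ 2), if_pos (mem_univ j)]
    · rw [if_neg hjj]
      apply Finset.prod_eq_zero (mem_univ j)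
      simp only [if_pos rfl, if_neg hjj, mul_one]
      exact hwr
  simp only [inner]
  simp only [Finset.sum_ite_eq univ, if_pos (mem_univ _)]
  rw [Finset.sum_const, Finset.card_univ, Fintype.card_fin, nsmul_eq_mul]

private lemma core_gap' {m k : ℕ} (hk : 0 < k) (w q : Fin m → ℝ) (M : ℝ)
    (hw0 : ∀ l, 0 ≤ w l) (hw1 : ∑ l, w l = 1)
    (hq0 : ∀ l, 0 < q l) (hq1 : ∀ l, q l ≤ 1) (hqM : ∀ l, 1 ≤ q l * M) :
    (∑ t : Fin k → Fin m, (∏ j, w (t j)) *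
        (((k:ℝ)⁻¹ * ∑ j, q (t j)) * Real.log ((k:ℝ)⁻¹ * ∑ j, q (t j))))
      - (∑ l, w l * q l) * Real.log (∑ l, w l * q l) ≤ M / (8 * k) := by
  have hm : m ≠ 0 := by rintro rfl; simp at hw1
  have hkR : (0:ℝ) < k := Nat.cast_pos.2 hk
  obtain ⟨l₀⟩ : Nonempty (Fin m) := ⟨⟨0, Nat.pos_of_ne_zero hm⟩⟩
  have hM1 : 1 ≤ M := by nlinarith [hqM l₀, hq0 l₀, hq1 l₀]
  have hM0 : 0 < M := lt_of_lt_of_le one_pos hM1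
  set S : ℝ := ∑ l, w l * q l with hS
  have hSM : 1 ≤ S * M := by
    rw [hS, Finset.sum_mul]
    calc (1:ℝ) = ∑ l, w l := hw1.symm
    _ ≤ ∑ l, w l * q l * M := by
        apply Finset.sum_le_sum
        intro l _
        rw [mul_assoc]
        nlinarith [hqM l, hw0 l]
  have hS0 : 0 < S := by nlinarith
  have hS1 : S ≤ 1 := by
    rw [hS, ← hw1]
    apply Finset.sum_le_sum
    intro l _
    nlinarith [hw0 l, hq1 l]
  have hQ0 : ∀ t : Fin k → Fin m, 0 < (k:ℝ)⁻¹ * ∑ j, q (t j) := by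
    intro t
    apply mul_pos (by positivity)
    exact Finset.sum_pos (fun j _ => hq0 (t j)) ⟨⟨0, hk⟩, mem_univ _⟩
  have hQM : ∀ t : Fin k → Fin m, 1 ≤ ((k:ℝ)⁻¹ * ∑ j, q (t j)) * M := by
    intro t
    have h1 : (k:ℝ) ≤ (∑ j, q (t j)) * M := by
      calc (k:ℝ) = ∑ _j : Fin k, (1:ℝ) := by simp
      _ ≤ ∑ j, q (t j) * M := Finset.sum_le_sum (fun j _ => hqM (t j))
      _ = (∑ j, q (t j)) * M := (Finset.sum_mul ..).symm
    calc (1:ℝ) = (k:ℝ)⁻¹ * k := by field_simp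
    _ ≤ (k:ℝ)⁻¹ * ((∑ j, q (t j)) * M) :=
        mul_le_mul_of_nonneg_left h1 (by positivity)
    _ = ((k:ℝ)⁻¹ * ∑ j, q (t j)) * M := by ring
  have hW0 : ∀ t : Fin k → Fin m, 0 ≤ ∏ j, w (t j) :=
    fun t => Finset.prod_nonneg (fun j _ => hw0 (t j))
  have ID1 : ∑ t : Fin k → Fin m, ∏ j, w (t j) = 1 := by
    have h2 := Finset.prod_univ_sum (fun _ : Fin k => (univ : Finset (Fin m)))
      (fun _ u => w u)
    rw [Fintype.piFinset_univ] at h2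
    rw [← h2]
    simp [hw1]
  have hr : ∑ l, w l * (q l - S) = 0 := by
    simp only [mul_sub]
    rw [Finset.sum_sub_distrib, ← Finset.sum_mul, hw1, one_mul, ← hS]
    exact sub_self S
  have hQS : ∀ t : Fin k → Fin m,
      (k:ℝ)⁻¹ * (∑ j, q (t j)) - S = (k:ℝ)⁻¹ * ∑ j, (q (t j) - S) := by
    intro t
    rw [Finset.sum_sub_distrib, Finset.sum_const, Finset.card_univ, Fintype.card_fin,
      nsmul_eq_mul, mul_sub, ← mul_assoc, inv_mul_cancel₀ hkR.ne', one_mul]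
  have ID2 : ∑ t : Fin k → Fin m,
      (∏ j, w (t j)) * ((k:ℝ)⁻¹ * (∑ j, q (t j)) - S) = 0 := by
    have hpt : ∀ t : Fin k → Fin m, (∏ j, w (t j)) * ((k:ℝ)⁻¹ * (∑ j, q (t j)) - S)
        = ∑ j, (k:ℝ)⁻¹ * ((∏ l, w (t l)) * (q (t j) - S)) := by
      intro t
      rw [hQS t, ← Finset.mul_sum, ← Finset.mul_sum]
      ring
    calc ∑ t : Fin k → Fin m, (∏ j, w (t j)) * ((k:ℝ)⁻¹ * (∑ j, q (t j)) - S)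
        = ∑ t : Fin k → Fin m, ∑ j, (k:ℝ)⁻¹ * ((∏ l, w (t l)) * (q (t j) - S)) :=
          Finset.sum_congr rfl (fun t _ => hpt t)
      _ = ∑ j : Fin k, ∑ t : Fin k → Fin m, (k:ℝ)⁻¹ * ((∏ l, w (t l)) * (q (t j) - S)) :=
          Finset.sum_comm
      _ = 0 := by
          apply Finset.sum_eq_zero
          intro j _
          rw [← Finset.mul_sum, indep_one w (fun u => q u - S) hr j, mul_zero]
  have ID3 : ∑ t : Fin k → Fin m,
      (∏ j, w (t j)) * ((k:ℝ)⁻¹ * (∑ j, q (t j)) - S) ^ 2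
        = (k:ℝ)⁻¹ * ∑ l, w l * (q l - S) ^ 2 := by
    have hpt : ∀ t : Fin k → Fin m, (∏ j, w (t j)) * ((k:ℝ)⁻¹ * (∑ j, q (t j)) - S) ^ 2
        = ((k:ℝ)⁻¹)^2 * ((∏ l, w (t l)) * (∑ j, (q (t j) - S)) ^ 2) := by
      intro t
      rw [hQS t]
      ring
    calc ∑ t : Fin k → Fin m, (∏ j, w (t j)) * ((k:ℝ)⁻¹ * (∑ j, q (t j)) - S) ^ 2
        = ∑ t : Fin k → Fin m, ((k:ℝ)⁻¹)^2 * ((∏ l, w (t l)) * (∑ j, (q (t j) - S)) ^ 2) :=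
          Finset.sum_congr rfl (fun t _ => hpt t)
      _ = ((k:ℝ)⁻¹)^2 * ∑ t : Fin k → Fin m, (∏ l, w (t l)) * (∑ j, (q (t j) - S)) ^ 2 :=
          (Finset.mul_sum ..).symm
      _ = ((k:ℝ)⁻¹)^2 * ((k:ℝ) * ∑ l, w l * (q l - S) ^ 2) := by
          rw [indep_two w (fun u => q u - S) hw1 hr]
      _ = (k:ℝ)⁻¹ * ∑ l, w l * (q l - S) ^ 2 := by
          field_simp
  have VB : ∑ l, w l * (q l - S) ^ 2 ≤ 1/4 := by
    have heq : ∑ l, w l * (q l - S) ^ 2 = (∑ l, w l * q l ^ 2) - S ^ 2 := by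
      have hpt : ∀ l, w l * (q l - S) ^ 2
          = w l * q l ^ 2 - 2 * S * (w l * q l) + S ^ 2 * w l := fun l => by ring
      simp only [hpt]
      rw [Finset.sum_add_distrib, Finset.sum_sub_distrib, ← Finset.mul_sum,
        ← Finset.mul_sum, hw1, ← hS]
      ring
    have hle : ∑ l, w l * q l ^ 2 ≤ ∑ l, w l * q l :=
      Finset.sum_le_sum (fun l _ => by
        nlinarith [mul_nonneg (mul_nonneg (hw0 l) (hq0 l).le) (sub_nonneg.2 (hq1 l))])
    rw [heq]
    rw [hS] at *
    nlinarith [sq_nonneg ((∑ l, w l * q l) - 1/2)]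
  have hbreg : ∀ t : Fin k → Fin m,
      (∏ j, w (t j)) * (((k:ℝ)⁻¹ * ∑ j, q (t j)) * Real.log ((k:ℝ)⁻¹ * ∑ j, q (t j)))
        ≤ (∏ j, w (t j)) * (((k:ℝ)⁻¹ * ∑ j, q (t j)) * Real.log S
            + ((k:ℝ)⁻¹ * (∑ j, q (t j)) - S)
            + M / 2 * ((k:ℝ)⁻¹ * (∑ j, q (t j)) - S) ^ 2) := by
    intro t
    apply mul_le_mul_of_nonneg_left _ (hW0 t)
    have := bregman_le' ((k:ℝ)⁻¹ * ∑ j, q (t j)) S M (hQ0 t) hS0 (hQM t) hSM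
    linarith
  have hsum : ∑ t : Fin k → Fin m,
      (∏ j, w (t j)) * (((k:ℝ)⁻¹ * ∑ j, q (t j)) * Real.log ((k:ℝ)⁻¹ * ∑ j, q (t j)))
      ≤ ∑ t : Fin k → Fin m,
        (∏ j, w (t j)) * (((k:ℝ)⁻¹ * ∑ j, q (t j)) * Real.log S
          + ((k:ℝ)⁻¹ * (∑ j, q (t j)) - S)
          + M / 2 * ((k:ℝ)⁻¹ * (∑ j, q (t j)) - S) ^ 2) :=
    Finset.sum_le_sum (fun t _ => hbreg t)
  have hexp : ∑ t : Fin k → Fin m,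
      (∏ j, w (t j)) * (((k:ℝ)⁻¹ * ∑ j, q (t j)) * Real.log S
        + ((k:ℝ)⁻¹ * (∑ j, q (t j)) - S)
        + M / 2 * ((k:ℝ)⁻¹ * (∑ j, q (t j)) - S) ^ 2)
      = S * Real.log S + M / 2 * ((k:ℝ)⁻¹ * ∑ l, w l * (q l - S) ^ 2) := by
    have hpt : ∀ t : Fin k → Fin m,
        (∏ j, w (t j)) * (((k:ℝ)⁻¹ * ∑ j, q (t j)) * Real.log S
          + ((k:ℝ)⁻¹ * (∑ j, q (t j)) - S)
          + M / 2 * ((k:ℝ)⁻¹ * (∑ j, q (t j)) - S) ^ 2)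
        = Real.log S * ((∏ j, w (t j)) * ((k:ℝ)⁻¹ * (∑ j, q (t j)) - S))
          + Real.log S * (S * (∏ j, w (t j)))
          + (∏ j, w (t j)) * ((k:ℝ)⁻¹ * (∑ j, q (t j)) - S)
          + M / 2 * ((∏ j, w (t j)) * ((k:ℝ)⁻¹ * (∑ j, q (t j)) - S) ^ 2) := by
      intro t; ring
    simp only [hpt]
    rw [Finset.sum_add_distrib, Finset.sum_add_distrib, Finset.sum_add_distrib,
      ← Finset.mul_sum, ← Finset.mul_sum, ← Finset.mul_sum, ← Finset.mul_sum, ID2, ID1, ID3]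
    ring
  rw [hexp] at hsum
  have hfinal : M / 2 * ((k:ℝ)⁻¹ * ∑ l, w l * (q l - S) ^ 2) ≤ M / (8 * k) := by
    have h1 : (k:ℝ)⁻¹ * ∑ l, w l * (q l - S) ^ 2 ≤ (k:ℝ)⁻¹ * (1/4) :=
      mul_le_mul_of_nonneg_left VB (by positivity)
    calc M / 2 * ((k:ℝ)⁻¹ * ∑ l, w l * (q l - S) ^ 2)
        ≤ M / 2 * ((k:ℝ)⁻¹ * (1/4)) := mul_le_mul_of_nonneg_left h1 (by positivity)
      _ = M / (8 * k) := by
          rw [div_eq_mul_inv M (8*(k:ℝ)), mul_inv]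
          ring
  linarith

private lemma extendProb_sum' (c m : ℕ) (a : Fin m → ℝ) (p : Fin m → Fin (c-1) → ℝ)
    (ha : ∑ l, a l = 1) (i : Fin c) :
    extendProb c (∑ l, a l • p l) i = ∑ l, a l * extendProb c (p l) i := by
  unfold extendProb
  split_ifs with h
  · simp [Finset.sum_apply]
  · have hsw : ∑ j : Fin (c-1), ∑ l, a l * p l j = ∑ l, a l * ∑ j, p l j := by
      rw [Finset.sum_comm]
      exact Finset.sum_congr rfl (fun l _ => (Finset.mul_sum ..).symm)
    simp only [Finset.sum_apply, Pi.smul_apply, smul_eq_mul, mul_sub, mul_one]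
    rw [hsw, Finset.sum_sub_distrib, ha]

private lemma negEnt_eq' (c : ℕ) (p : Fin (c - 1) → ℝ) :
    negEnt c p = ∑ i : Fin c, extendProb c p i * Real.log (extendProb c p i) := by
  match c with
  | 0 => simp [negEnt, extendProb]
  | (n+1) =>
    have h1 : ∀ i : Fin n, extendProb (n+1) p i.castSucc = p i := by
      intro i
      simp [extendProb, i.isLt]
    have h2 : extendProb (n+1) p (Fin.last n) = 1 - ∑ j, p j := by
      simp [extendProb]
    rw [Fin.sum_univ_castSucc]
    simp only [h1, h2]
    rfl

private lemma extendProb_bounds (c : ℕ) (p : Fin (c-1) → ℝ) (hp : p ∈ redSimplex c)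
    (i : Fin c) : 0 < extendProb c p i ∧ extendProb c p i ≤ 1 := by
  obtain ⟨h1, h2⟩ := hp
  unfold extendProb
  split_ifs with h
  · exact ⟨(h1 ⟨i, h⟩).1, (h1 ⟨i, h⟩).2.le⟩
  · constructor
    · linarith
    · have : 0 ≤ ∑ j, p j := Finset.sum_nonneg (fun j _ => (h1 j).1.le)
      linarith

end AuxJensenGap

open Finset in

/-- **Functional Jensen approximation gap of the negative Shannon entropy**: for a class `𝓕`
of functions `𝒳 → ▵^{c−1}` with `ρ_i = E[sup_{f ∈ 𝓕} 1/f_i(X)] < ∞` (as witnessed by the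
pointwise suprema `s i x`), the Jensen gap of the functional `Ψ[f] = E[ψ(f(X))]` restricted
to `co 𝓕` is at most `(1/(8k)) Σ_i ρ_i`. -/
theorem jensenGap_negEnt_functional_le
    (c : ℕ) {𝒳 : Type*} [Fintype 𝒳]
    (μ : 𝒳 → ℝ) (hμpos : ∀ x, 0 ≤ μ x) (hμsum : ∑ x, μ x = 1)
    (𝓕 : Set (𝒳 → Fin (c - 1) → ℝ))
    (h𝓕mem : ∀ f ∈ 𝓕, ∀ x, f x ∈ redSimplex c)
    (s : Fin c → 𝒳 → ℝ)
    (hsup : ∀ i x,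
      IsLUB ((fun f : 𝒳 → Fin (c - 1) → ℝ => 1 / extendProb c (f x) i) '' 𝓕) (s i x))
    (ρ : Fin c → ℝ)
    (hρ : ∀ i, ρ i = ∑ x, μ x * s i x)
    (k : ℕ) (hk : 0 < k) :
    jensenGap k (convexHull ℝ 𝓕) (fun f => ∑ x, μ x * negEnt c (f x)) ≤
      (1 / (8 * k)) * ∑ i, ρ i := by
  classical
  have h𝒳 : Nonempty 𝒳 := by
    by_contra h
    rw [not_nonempty_iff] at h
    rw [Finset.univ_eq_empty, Finset.sum_empty] at hμsum
    exact one_ne_zero hμsum.symm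
  have hkR : (0:ℝ) < (k:ℝ) := Nat.cast_pos.2 hk
  have hF_ne : Fin c → 𝓕.Nonempty := by
    intro i
    by_contra h
    obtain ⟨x⟩ := h𝒳
    have hlub := hsup i x
    rw [Set.not_nonempty_iff_eq_empty] at h
    rw [h, Set.image_empty] at hlub
    have h2 : s i x ≤ s i x - 1 :=
      hlub.2 (by intro y hy; exact absurd hy (Set.notMem_empty y))
    linarith
  have hs1 : ∀ (i : Fin c) x, 1 ≤ s i x := by
    intro i x
    obtain ⟨f, hf⟩ := hF_ne i
    have hub := (hsup i x).1 (Set.mem_image_of_mem _ hf)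
    have hE := extendProb_bounds c (f x) (h𝓕mem f hf x) i
    calc (1:ℝ) ≤ 1 / extendProb c (f x) i := by
          rw [le_div_iff₀ hE.1]; simpa using hE.2
    _ ≤ s i x := hub
  have hspos : ∀ (i : Fin c) x, 0 < s i x :=
    fun i x => lt_of_lt_of_le one_pos (hs1 i x)
  -- convex hull membership facts
  have hC : convexHull ℝ 𝓕 ⊆ {g : 𝒳 → Fin (c-1) → ℝ | ∀ x (i : Fin c),
      0 < extendProb c (g x) i ∧ extendProb c (g x) i ≤ 1 ∧
        1 ≤ extendProb c (g x) i * s i x} := by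
    apply convexHull_min
    · intro f hf x i
      have hE := extendProb_bounds c (f x) (h𝓕mem f hf x) i
      refine ⟨hE.1, hE.2, ?_⟩
      have hub := (hsup i x).1 (Set.mem_image_of_mem _ hf)
      rw [div_le_iff₀ hE.1] at hub
      linarith [hub]
    · intro g₁ hg₁ g₂ hg₂ a b ha hb hab
      intro x i
      obtain ⟨h1p, h1le, h1s⟩ := hg₁ x i
      obtain ⟨h2p, h2le, h2s⟩ := hg₂ x i
      have hrep : extendProb c ((a • g₁ + b • g₂) x) i
          = a * extendProb c (g₁ x) i + b * extendProb c (g₂ x) i := by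
        have h0 : (a • g₁ + b • g₂) x = ∑ l : Fin 2, (![a, b] l) • (![g₁ x, g₂ x] l) := by
          simp [Fin.sum_univ_two]
        rw [h0, extendProb_sum' c 2 ![a, b] ![g₁ x, g₂ x] (by simp [Fin.sum_univ_two, hab]) i]
        simp [Fin.sum_univ_two]
      have hkey : 1 ≤ extendProb c ((a • g₁ + b • g₂) x) i * s i x := by
        rw [hrep]
        nlinarith [mul_le_mul_of_nonneg_left h1s ha, mul_le_mul_of_nonneg_left h2s hb]
      refine ⟨?_, ?_, hkey⟩
      · nlinarith [hspos i x, hkey]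
      · rw [hrep]; nlinarith [mul_le_mul_of_nonneg_left h1le ha,
          mul_le_mul_of_nonneg_left h2le hb]
  apply Real.sSup_le
  swap
  · apply mul_nonneg (by positivity)
    apply Finset.sum_nonneg; intro i _
    rw [hρ i]
    apply Finset.sum_nonneg; intro x _
    exact mul_nonneg (hμpos x) (le_trans zero_le_one (hs1 i x))
  rintro gap ⟨m, w, z, hw0, hw1, hz, hzc, rfl⟩
  dsimp only
  -- notation
  set q : Fin m → 𝒳 → Fin c → ℝ := fun l x i => extendProb c (z l x) i with hq
  have hqfacts : ∀ l x (i : Fin c),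
      0 < q l x i ∧ q l x i ≤ 1 ∧ 1 ≤ q l x i * s i x :=
    fun l x i => hC (hz l) x i
  -- value rewrites
  have hval1 : ∀ t : Fin k → Fin m, ∀ x,
      negEnt c (((k:ℝ)⁻¹ • ∑ j, z (t j)) x)
        = ∑ i : Fin c, ((k:ℝ)⁻¹ * ∑ j, q (t j) x i) *
            Real.log ((k:ℝ)⁻¹ * ∑ j, q (t j) x i) := by
    intro t x
    rw [negEnt_eq']
    apply Finset.sum_congr rfl
    intro i _
    have h0 : ((k:ℝ)⁻¹ • ∑ j, z (t j)) x = ∑ j : Fin k, (k:ℝ)⁻¹ • (z (t j) x) := by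
      simp [Finset.sum_apply, Finset.smul_sum]
    rw [h0, extendProb_sum' c k (fun _ => (k:ℝ)⁻¹) (fun j => z (t j) x)
      (by rw [Finset.sum_const, Finset.card_univ, Fintype.card_fin, nsmul_eq_mul,
        mul_inv_cancel₀ hkR.ne']) i, ← Finset.mul_sum]
  have hval2 : ∀ x,
      negEnt c ((∑ l, w l • z l) x)
        = ∑ i : Fin c, (∑ l, w l * q l x i) * Real.log (∑ l, w l * q l x i) := by
    intro x
    rw [negEnt_eq']
    apply Finset.sum_congr rfl
    intro i _
    have h0 : (∑ l, w l • z l) x = ∑ l, w l • (z l x) := by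
      simp [Finset.sum_apply]
    rw [h0, extendProb_sum' c m w (fun l => z l x) hw1 i]
  simp only [hval1, hval2]
  -- rearrange sums
  have lhs_eq :
      (∑ t : Fin k → Fin m, (∏ j, w (t j)) *
          (∑ x, μ x * ∑ i : Fin c, ((k:ℝ)⁻¹ * ∑ j, q (t j) x i) *
            Real.log ((k:ℝ)⁻¹ * ∑ j, q (t j) x i)))
        - (∑ x, μ x * ∑ i : Fin c, (∑ l, w l * q l x i) * Real.log (∑ l, w l * q l x i))
      = ∑ x, ∑ i : Fin c, μ x *
          ((∑ t : Fin k → Fin m, (∏ j, w (t j)) *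
              (((k:ℝ)⁻¹ * ∑ j, q (t j) x i) * Real.log ((k:ℝ)⁻¹ * ∑ j, q (t j) x i)))
            - (∑ l, w l * q l x i) * Real.log (∑ l, w l * q l x i)) := by
    have e1 : ∀ t : Fin k → Fin m, (∏ j, w (t j)) *
        (∑ x, μ x * ∑ i : Fin c, ((k:ℝ)⁻¹ * ∑ j, q (t j) x i) *
          Real.log ((k:ℝ)⁻¹ * ∑ j, q (t j) x i))
        = ∑ x, ∑ i : Fin c, μ x * ((∏ j, w (t j)) *
            (((k:ℝ)⁻¹ * ∑ j, q (t j) x i) * Real.log ((k:ℝ)⁻¹ * ∑ j, q (t j) x i))) := by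
      intro t
      rw [Finset.mul_sum]
      apply Finset.sum_congr rfl
      intro x _
      rw [Finset.mul_sum, Finset.mul_sum]
      apply Finset.sum_congr rfl
      intro i _
      ring
    have e2 : ∀ x, μ x * ∑ i : Fin c, (∑ l, w l * q l x i) * Real.log (∑ l, w l * q l x i)
        = ∑ i : Fin c, μ x * ((∑ l, w l * q l x i) * Real.log (∑ l, w l * q l x i)) :=
      fun x => Finset.mul_sum ..
    rw [Finset.sum_congr rfl (fun t _ => e1 t), Finset.sum_congr rfl (fun x _ => e2 x)]
    rw [Finset.sum_comm]
    rw [← Finset.sum_sub_distrib]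
    apply Finset.sum_congr rfl
    intro x _
    rw [Finset.sum_comm]
    rw [← Finset.sum_sub_distrib]
    apply Finset.sum_congr rfl
    intro i _
    rw [← Finset.mul_sum, ← mul_sub]
  rw [lhs_eq]
  have step2 : ∀ x (i : Fin c),
      μ x * ((∑ t : Fin k → Fin m, (∏ j, w (t j)) *
          (((k:ℝ)⁻¹ * ∑ j, q (t j) x i) * Real.log ((k:ℝ)⁻¹ * ∑ j, q (t j) x i)))
        - (∑ l, w l * q l x i) * Real.log (∑ l, w l * q l x i))
      ≤ μ x * (s i x / (8 * k)) := by
    intro x i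
    apply mul_le_mul_of_nonneg_left _ (hμpos x)
    exact core_gap' hk w (fun l => q l x i) (s i x) hw0 hw1
      (fun l => (hqfacts l x i).1) (fun l => (hqfacts l x i).2.1)
      (fun l => (hqfacts l x i).2.2)
  calc ∑ x, ∑ i : Fin c, μ x *
          ((∑ t : Fin k → Fin m, (∏ j, w (t j)) *
              (((k:ℝ)⁻¹ * ∑ j, q (t j) x i) * Real.log ((k:ℝ)⁻¹ * ∑ j, q (t j) x i)))
            - (∑ l, w l * q l x i) * Real.log (∑ l, w l * q l x i))
      ≤ ∑ x, ∑ i : Fin c, μ x * (s i x / (8 * k)) :=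
        Finset.sum_le_sum (fun x _ => Finset.sum_le_sum (fun i _ => step2 x i))
    _ = (1 / (8 * k)) * ∑ i, ρ i := by
        rw [Finset.sum_comm, Finset.mul_sum]
        apply Finset.sum_congr rfl
        intro i _
        rw [hρ i, Finset.mul_sum]
        apply Finset.sum_congr rfl
        intro x _
        ring
end

section
/- Let K ⊂ ℝ^c be a bounded convex set, let a₁,…,a_c > 0, and let φ: K → ℝ be a function such that x ↦ φ(x) − (1/2)·Σ_{i=1}^c a_i·x_i² is concave on K. Let Z be a random variable with finite support contained in K, and let Z̄^{(k)} denote the average of k i.i.d. copies of Z. Then E[φ(Z̄^{(k)})] − φ(E[Z]) ≤ (1/(2k))·Σ_{i=1}^c a_i·Var[Z_i]. -/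
open Real Finset

-- basic product-of-sums identity, specialized
private lemma sum_prod_fn {k m : ℕ} (f : Fin k → Fin m → ℝ) :
    ∑ t : Fin k → Fin m, ∏ l, f l (t l) = ∏ l, ∑ v, f l v :=
  (Fintype.prod_sum f).symm

private lemma marginal {k m : ℕ} (w : Fin m → ℝ) (hwsum : ∑ j, w j = 1)
    (g : Fin m → ℝ) (j : Fin k) :
    ∑ t : Fin k → Fin m, (∏ l, w (t l)) * g (t j) = ∑ v, w v * g v := by
  have h : ∀ t : Fin k → Fin m, (∏ l, w (t l)) * g (t j)
      = ∏ l, (w (t l) * if l = j then g (t l) else 1) := by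
    intro t
    rw [Finset.prod_mul_distrib, Finset.prod_ite_eq' Finset.univ j (fun l => g (t l))]
    simp
  simp_rw [h]
  rw [sum_prod_fn (fun l v => w v * if l = j then g v else 1)]
  have h2 : ∀ l : Fin k, (∑ v, w v * if l = j then g v else 1)
      = if l = j then ∑ v, w v * g v else 1 := by
    intro l
    split <;> simp [hwsum]
  simp_rw [h2]
  rw [Finset.prod_ite_eq' Finset.univ j (fun _ => ∑ v, w v * g v)]
  simp

private lemma pair_marginal {k m : ℕ} (w : Fin m → ℝ) (hwsum : ∑ j, w j = 1)
    (g : Fin m → ℝ) (j j' : Fin k) (hjj : j ≠ j') :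
    ∑ t : Fin k → Fin m, (∏ l, w (t l)) * (g (t j) * g (t j'))
      = (∑ v, w v * g v) * (∑ v, w v * g v) := by
  have h : ∀ t : Fin k → Fin m, (∏ l, w (t l)) * (g (t j) * g (t j'))
      = ∏ l, (w (t l) * ((if l = j then g (t l) else 1) * (if l = j' then g (t l) else 1))) := by
    intro t
    rw [Finset.prod_mul_distrib, Finset.prod_mul_distrib,
      Finset.prod_ite_eq' Finset.univ j (fun l => g (t l)),
      Finset.prod_ite_eq' Finset.univ j' (fun l => g (t l))]
    simp
  simp_rw [h]
  rw [sum_prod_fn (fun l v => w v * ((if l = j then g v else 1) * (if l = j' then g v else 1)))]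
  have h2 : ∀ l : Fin k, (∑ v, w v * ((if l = j then g v else 1) * (if l = j' then g v else 1)))
      = (if l = j then (∑ v, w v * g v) else 1) * (if l = j' then (∑ v, w v * g v) else 1) := by
    intro l
    by_cases h1 : l = j <;> by_cases h3 : l = j' <;> simp_all [hwsum]
  simp_rw [h2]
  rw [Finset.prod_mul_distrib, Finset.prod_ite_eq' Finset.univ j (fun _ => ∑ v, w v * g v),
    Finset.prod_ite_eq' Finset.univ j' (fun _ => ∑ v, w v * g v)]
  simp

private lemma second_moment {k m : ℕ} (w : Fin m → ℝ) (hwsum : ∑ j, w j = 1)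
    (g : Fin m → ℝ) :
    ∑ t : Fin k → Fin m, (∏ l, w (t l)) * (∑ j, g (t j)) ^ 2
      = (k : ℝ) * (∑ v, w v * (g v * g v))
        + ((k : ℝ) ^ 2 - k) * ((∑ v, w v * g v) * (∑ v, w v * g v)) := by
  have hsq : ∀ t : Fin k → Fin m,
      (∏ l, w (t l)) * (∑ j, g (t j)) ^ 2
        = ∑ j, ∑ j', (∏ l, w (t l)) * (g (t j) * g (t j')) := by
    intro t
    rw [sq, Finset.sum_mul_sum]
    simp_rw [Finset.mul_sum]
  simp_rw [hsq]
  rw [Finset.sum_comm]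
  have hswap : ∀ j : Fin k,
      ∑ t : Fin k → Fin m, ∑ j', (∏ l, w (t l)) * (g (t j) * g (t j'))
        = ∑ j', ∑ t : Fin k → Fin m, (∏ l, w (t l)) * (g (t j) * g (t j')) := fun j =>
    Finset.sum_comm
  simp_rw [hswap]
  have key : ∀ j j' : Fin k,
      ∑ t : Fin k → Fin m, (∏ l, w (t l)) * (g (t j) * g (t j'))
        = if j = j' then (∑ v, w v * (g v * g v))
          else (∑ v, w v * g v) * (∑ v, w v * g v) := by
    intro j j'
    by_cases hh : j = j'
    · subst hh; simp only [if_pos rfl]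
      exact marginal w hwsum (fun v => g v * g v) j
    · rw [if_neg hh]; exact pair_marginal w hwsum g j j' hh
  simp_rw [key]
  set S2 := ∑ v, w v * (g v * g v)
  set C := (∑ v, w v * g v) * (∑ v, w v * g v)
  have hrw : ∀ j j' : Fin k, (if j = j' then S2 else C) = C + (if j = j' then S2 - C else 0) := by
    intro j j'; split <;> ring
  simp_rw [hrw, Finset.sum_add_distrib, Finset.sum_ite_eq]
  simp only [Finset.mem_univ, if_pos, Finset.sum_const, Finset.card_univ, Fintype.card_fin,
    nsmul_eq_mul, smul_eq_mul]
  ring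

private lemma var_eq {m : ℕ} (w : Fin m → ℝ) (hwsum : ∑ j, w j = 1) (g : Fin m → ℝ) :
    ∑ v, w v * (g v - ∑ l, w l * g l) ^ 2
      = (∑ v, w v * (g v * g v)) - (∑ v, w v * g v) * (∑ v, w v * g v) := by
  have h : ∀ v, w v * (g v - ∑ l, w l * g l) ^ 2
      = w v * (g v * g v) - (2 * ∑ l, w l * g l) * (w v * g v)
        + (∑ l, w l * g l) ^ 2 * w v := by
    intro v; ring
  simp_rw [h]
  rw [Finset.sum_add_distrib, Finset.sum_sub_distrib, ← Finset.mul_sum, ← Finset.mul_sum,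
    hwsum]
  ring


/-- **Jensen gap bound from semi-concavity**: let `K ⊆ ℝ^c` be bounded and convex, let
`a_i > 0`, and let `φ : K → ℝ` be such that `x ↦ φ(x) − (1/2) Σ_i a_i x_i²` is concave on
`K`.  Let `Z` be a finitely supported random variable with values `z j ∈ K` and weights
`w j`, and let `Z̄^{(k)}` be the average of `k` i.i.d. copies of `Z`.  Then
`E[φ(Z̄^{(k)})] − φ(E[Z]) ≤ (1/(2k)) Σ_i a_i Var[Z_i]`. -/
theorem jensen_gap_of_semiconcave
    {c : ℕ}
    (K : Set (Fin c → ℝ)) (hKbdd : Bornology.IsBounded K) (hKconv : Convex ℝ K)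
    (a : Fin c → ℝ) (ha : ∀ i, 0 < a i)
    (φ : (Fin c → ℝ) → ℝ)
    (hconc : ConcaveOn ℝ K (fun x => φ x - (1/2) * ∑ i, a i * (x i) ^ 2))
    (m : ℕ) (w : Fin m → ℝ) (z : Fin m → Fin c → ℝ)
    (hw : ∀ j, 0 ≤ w j) (hwsum : ∑ j, w j = 1) (hz : ∀ j, z j ∈ K)
    (k : ℕ) (hk : 0 < k) :
    (∑ t : Fin k → Fin m, (∏ j, w (t j)) * φ ((k : ℝ)⁻¹ • ∑ j, z (t j)))
        - φ (∑ j, w j • z j) ≤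
      (1 / (2 * k)) * ∑ i, a i *
        (∑ j, w j * (z j i - ∑ l, w l * z l i) ^ 2) := by
  classical
  have hk' : (k : ℝ) ≠ 0 := Nat.cast_ne_zero.mpr hk.ne'
  have hW0 : ∀ t : Fin k → Fin m, 0 ≤ ∏ l, w (t l) :=
    fun t => Finset.prod_nonneg fun l _ => hw _
  have hWsum : ∑ t : Fin k → Fin m, ∏ l, w (t l) = 1 := by
    rw [sum_prod_fn (fun (_ : Fin k) v => w v)]
    simp [hwsum]
  have hxK : ∀ t : Fin k → Fin m, (k : ℝ)⁻¹ • ∑ j, z (t j) ∈ K := by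
    intro t
    rw [Finset.smul_sum]
    refine hKconv.sum_mem (fun j _ => by positivity) ?_ (fun j _ => hz _)
    rw [Finset.sum_const, Finset.card_univ, Fintype.card_fin, nsmul_eq_mul,
      mul_inv_cancel₀ hk']
  have hmean : ∑ t : Fin k → Fin m, (∏ l, w (t l)) • ((k : ℝ)⁻¹ • ∑ j, z (t j))
      = ∑ j, w j • z j := by
    funext i
    simp only [Finset.sum_apply, Pi.smul_apply, smul_eq_mul]
    have h1 : ∀ t : Fin k → Fin m, (∏ l, w (t l)) * ((k : ℝ)⁻¹ * ∑ j, z (t j) i)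
        = (k : ℝ)⁻¹ * ∑ j, (∏ l, w (t l)) * z (t j) i := by
      intro t
      rw [Finset.mul_sum]
      rw [Finset.mul_sum]
      rw [Finset.mul_sum]
      exact Finset.sum_congr rfl fun j _ => by ring
    simp_rw [h1]
    rw [← Finset.mul_sum, Finset.sum_comm]
    have h2 : ∀ j : Fin k, ∑ t : Fin k → Fin m, (∏ l, w (t l)) * z (t j) i
        = ∑ v, w v * z v i := fun j => marginal w hwsum (fun v => z v i) j
    simp_rw [h2]
    rw [Finset.sum_const, Finset.card_univ, Fintype.card_fin, nsmul_eq_mul, ← mul_assoc,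
      inv_mul_cancel₀ hk', one_mul]
  have hjen : ∑ t : Fin k → Fin m, (∏ l, w (t l)) *
      (φ ((k : ℝ)⁻¹ • ∑ j, z (t j))
        - (1/2) * ∑ i, a i * (((k : ℝ)⁻¹ • ∑ j, z (t j)) i) ^ 2)
      ≤ φ (∑ j, w j • z j) - (1/2) * ∑ i, a i * ((∑ j, w j • z j) i) ^ 2 := by
    have h := hconc.le_map_sum (t := Finset.univ)
      (w := fun t : Fin k → Fin m => ∏ l, w (t l))
      (p := fun t : Fin k → Fin m => (k : ℝ)⁻¹ • ∑ j, z (t j))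
      (fun t _ => hW0 t) hWsum (fun t _ => hxK t)
    rw [hmean] at h
    simpa [smul_eq_mul] using h
  have key : ∀ i : Fin c,
      ∑ t : Fin k → Fin m, (∏ l, w (t l)) * (((k : ℝ)⁻¹ • ∑ j, z (t j)) i) ^ 2
        = (k : ℝ)⁻¹ ^ 2 * ((k : ℝ) * (∑ v, w v * (z v i * z v i))
            + ((k : ℝ) ^ 2 - k) * ((∑ v, w v * z v i) * (∑ v, w v * z v i))) := by
    intro i
    have h1 : ∀ t : Fin k → Fin m,
        (∏ l, w (t l)) * (((k : ℝ)⁻¹ • ∑ j, z (t j)) i) ^ 2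
          = (k : ℝ)⁻¹ ^ 2 * ((∏ l, w (t l)) * (∑ j, z (t j) i) ^ 2) := by
      intro t
      simp only [Pi.smul_apply, Finset.sum_apply, smul_eq_mul, mul_pow]
      ring
    simp_rw [h1, ← Finset.mul_sum, second_moment w hwsum (fun v => z v i)]
  have hμi : ∀ i : Fin c, (∑ j, w j • z j) i = ∑ l, w l * z l i := by
    intro i; simp [Finset.sum_apply]
  have hquad :
      (∑ t : Fin k → Fin m, (∏ l, w (t l)) *
          ((1/2) * ∑ i, a i * (((k : ℝ)⁻¹ • ∑ j, z (t j)) i) ^ 2))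
        - (1/2) * ∑ i, a i * ((∑ j, w j • z j) i) ^ 2
      = (1 / (2 * k)) * ∑ i, a i *
          (∑ j, w j * (z j i - ∑ l, w l * z l i) ^ 2) := by
    have h1 : ∀ t : Fin k → Fin m,
        (∏ l, w (t l)) * ((1/2) * ∑ i, a i * (((k : ℝ)⁻¹ • ∑ j, z (t j)) i) ^ 2)
          = ∑ i, (1/2) * (a i * ((∏ l, w (t l)) * (((k : ℝ)⁻¹ • ∑ j, z (t j)) i) ^ 2)) := by
      intro t
      rw [Finset.mul_sum]
      rw [Finset.mul_sum]
      exact Finset.sum_congr rfl fun i _ => by ring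
    simp_rw [h1]
    rw [Finset.sum_comm]
    have h2 : ∀ i : Fin c,
        ∑ t : Fin k → Fin m,
            (1/2) * (a i * ((∏ l, w (t l)) * (((k : ℝ)⁻¹ • ∑ j, z (t j)) i) ^ 2))
          = (1/2) * (a i * ((k : ℝ)⁻¹ ^ 2 * ((k : ℝ) * (∑ v, w v * (z v i * z v i))
              + ((k : ℝ) ^ 2 - k) * ((∑ v, w v * z v i) * (∑ v, w v * z v i))))) := by
      intro i
      rw [← Finset.mul_sum, ← Finset.mul_sum, key i]
    simp_rw [h2, hμi, var_eq w hwsum]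
    rw [Finset.mul_sum, Finset.mul_sum, ← Finset.sum_sub_distrib]
    refine Finset.sum_congr rfl fun i _ => ?_
    field_simp
    ring
  have expand : (∑ t : Fin k → Fin m, (∏ j, w (t j)) * φ ((k : ℝ)⁻¹ • ∑ j, z (t j)))
      = (∑ t : Fin k → Fin m, (∏ l, w (t l)) *
          (φ ((k : ℝ)⁻¹ • ∑ j, z (t j))
            - (1/2) * ∑ i, a i * (((k : ℝ)⁻¹ • ∑ j, z (t j)) i) ^ 2))
        + ∑ t : Fin k → Fin m, (∏ l, w (t l)) *
            ((1/2) * ∑ i, a i * (((k : ℝ)⁻¹ • ∑ j, z (t j)) i) ^ 2) := by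
    rw [← Finset.sum_add_distrib]
    exact Finset.sum_congr rfl fun t _ => by ring
  rw [expand]
  linarith [hjen, hquad]
end

section
/- Let X be a random variable with finite support 𝒳 in which every point has positive probability, let h_s: 𝒳 → ℝ^{d_s} and h_w: 𝒳 → ℝ^{d_w} be maps, let g: 𝒳 → (0,1), let f_w: ℝ^{d_w} → (0,1), and let 𝓕 be a convex set of functions ℝ^{d_s} → (0,1) such that g = f_* ∘ h_s for some f_* ∈ 𝓕. Suppose f_s ∈ 𝓕 exactly attains the infimum: E[D_KL(f_s(h_s(X)) ‖ f_w(h_w(X)))] = inf_{f ∈ 𝓕} E[D_KL(f(h_s(X)) ‖ f_w(h_w(X)))]. Then E[XE(g(X) ‖ f_s(h_s(X)))] ≤ E[XE(g(X) ‖ f_w(h_w(X)))] − E[D_KL(f_s(h_s(X)) ‖ f_w(h_w(X)))]. -/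
open Real

/-- Binary KL divergence `D_KL(p ‖ q) = p log(p/q) + (1−p) log((1−p)/(1−q))`. -/
noncomputable def klBin (p q : ℝ) : ℝ :=
  p * Real.log (p / q) + (1 - p) * Real.log ((1 - p) / (1 - q))

/-- Binary cross-entropy `XE(p ‖ q) = −p log q − (1−p) log(1−q)`. -/
noncomputable def xeBin (p q : ℝ) : ℝ :=
  -(p * Real.log q) - (1 - p) * Real.log (1 - q)

lemma klBin_nonneg {p q : ℝ} (hp : p ∈ Set.Ioo (0:ℝ) 1) (hq : q ∈ Set.Ioo (0:ℝ) 1) :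
    0 ≤ klBin p q := by
  obtain ⟨hp0, hp1⟩ := hp
  obtain ⟨hq0, hq1⟩ := hq
  have h1 : Real.log (q / p) ≤ q / p - 1 := Real.log_le_sub_one_of_pos (by positivity)
  have h2 : Real.log ((1 - q) / (1 - p)) ≤ (1 - q) / (1 - p) - 1 :=
    Real.log_le_sub_one_of_pos (by apply div_pos <;> linarith)
  have e1 : Real.log (p / q) = - Real.log (q / p) := by
    rw [← Real.log_inv]; congr 1; rw [inv_div]
  have e2 : Real.log ((1 - p) / (1 - q)) = - Real.log ((1 - q) / (1 - p)) := by
    rw [← Real.log_inv]; congr 1; rw [inv_div]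
  rw [klBin, e1, e2]
  have h1' := mul_le_mul_of_nonneg_left h1 hp0.le
  have h2' := mul_le_mul_of_nonneg_left h2 (by linarith : (0:ℝ) ≤ 1 - p)
  have e3 : p * (q / p - 1) = q - p := by field_simp
  have e4 : (1 - p) * ((1 - q) / (1 - p) - 1) = p - q := by
    have hne : (1:ℝ) - p ≠ 0 := by linarith
    field_simp
    ring
  nlinarith

lemma hasDerivAt_klBin {q : ℝ} (hq : q ∈ Set.Ioo (0:ℝ) 1) {p : ℝ} (hp : p ∈ Set.Ioo (0:ℝ) 1) :
    HasDerivAt (fun x => klBin x q)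
      (Real.log p - Real.log q - Real.log (1 - p) + Real.log (1 - q)) p := by
  obtain ⟨hp0, hp1⟩ := hp
  have h1 : HasDerivAt (fun x : ℝ => x * Real.log x) (Real.log p + 1) p :=
    Real.hasDerivAt_mul_log hp0.ne'
  have h2 : HasDerivAt (fun x : ℝ => x * Real.log q) (Real.log q) p := by
    simpa using (hasDerivAt_id p).mul_const (Real.log q)
  have hin : HasDerivAt (fun x : ℝ => 1 - x) (-1) p := by
    simpa using (hasDerivAt_id p).const_sub 1
  have h3 : HasDerivAt (fun x : ℝ => (1 - x) * Real.log (1 - x))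
      ((Real.log (1 - p) + 1) * (-1)) p := by
    exact (Real.hasDerivAt_mul_log (x := 1 - p) (by linarith)).comp p hin
  have h4 : HasDerivAt (fun x : ℝ => (1 - x) * Real.log (1 - q)) (-Real.log (1 - q)) p := by
    simpa using hin.mul_const (Real.log (1 - q))
  have hF := (h1.sub h2).add (h3.sub h4)
  have heq : (fun x : ℝ => klBin x q) =ᶠ[nhds p]
      (fun x : ℝ => x * Real.log x - x * Real.log q
        + ((1 - x) * Real.log (1 - x) - (1 - x) * Real.log (1 - q))) := by
    filter_upwards [Ioo_mem_nhds hp0 hp1] with x hx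
    rw [klBin, Real.log_div hx.1.ne' hq.1.ne',
      Real.log_div (by linarith [hx.2] : (1:ℝ) - x ≠ 0) (by linarith [hq.2] : (1:ℝ) - q ≠ 0)]
    ring
  have := hF.congr_of_eventuallyEq heq
  exact this.congr_deriv (by ring)

/-- **Cross-Entropy Misfit-Gain Inequality, exact minimizer case**: if `f_s ∈ 𝓕` exactly
attains the infimum of the expected (reverse) KL misfit to the weak model, then the
misfit-gain inequality holds with no error term. -/
theorem xe_misfit_gain_exact
    {ds dw : ℕ} {𝒳 : Type*} [Fintype 𝒳]
    (μ : 𝒳 → ℝ) (hμpos : ∀ x, 0 < μ x) (hμsum : ∑ x, μ x = 1)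
    (hs : 𝒳 → Fin ds → ℝ) (hw : 𝒳 → Fin dw → ℝ)
    (g : 𝒳 → ℝ) (hg : ∀ x, g x ∈ Set.Ioo (0:ℝ) 1)
    (fw : (Fin dw → ℝ) → ℝ) (hfw : ∀ v, fw v ∈ Set.Ioo (0:ℝ) 1)
    (𝓕 : Set ((Fin ds → ℝ) → ℝ))
    (h𝓕mem : ∀ f ∈ 𝓕, ∀ v, f v ∈ Set.Ioo (0:ℝ) 1)
    (h𝓕conv : Convex ℝ 𝓕)
    (hreal : ∃ fstar ∈ 𝓕, ∀ x, g x = fstar (hs x))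
    (fs : (Fin ds → ℝ) → ℝ) (hfs : fs ∈ 𝓕)
    (hmin : (∑ x, μ x * klBin (fs (hs x)) (fw (hw x))) =
      ⨅ f : 𝓕, ∑ x, μ x * klBin ((f : (Fin ds → ℝ) → ℝ) (hs x)) (fw (hw x))) :
    ∑ x, μ x * xeBin (g x) (fs (hs x)) ≤
      ∑ x, μ x * xeBin (g x) (fw (hw x))
        - ∑ x, μ x * klBin (fs (hs x)) (fw (hw x)) := by
  obtain ⟨fstar, hfstar, hgf⟩ := hreal
  have haI : ∀ x, fs (hs x) ∈ Set.Ioo (0:ℝ) 1 := fun x => h𝓕mem fs hfs (hs x)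
  have hqI : ∀ x, fw (hw x) ∈ Set.Ioo (0:ℝ) 1 := fun x => hfw (hw x)
  set φ : ℝ → ℝ :=
    fun t => ∑ x, μ x * klBin (fs (hs x) + t * (g x - fs (hs x))) (fw (hw x)) with hφ
  set S : ℝ := ∑ x, μ x * ((Real.log (fs (hs x)) - Real.log (fw (hw x))
      - Real.log (1 - fs (hs x)) + Real.log (1 - fw (hw x))) * (g x - fs (hs x))) with hSdef
  -- φ has derivative S at 0
  have hderiv : HasDerivAt φ S 0 := by
    rw [hφ, hSdef]
    apply HasDerivAt.fun_sum
    intro x _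
    have hinner : HasDerivAt (fun t : ℝ => fs (hs x) + t * (g x - fs (hs x)))
        (g x - fs (hs x)) 0 := by
      simpa using ((hasDerivAt_id (0:ℝ)).mul_const (g x - fs (hs x))).const_add (fs (hs x))
    have houter : HasDerivAt (fun y => klBin y (fw (hw x)))
        (Real.log (fs (hs x)) - Real.log (fw (hw x))
          - Real.log (1 - fs (hs x)) + Real.log (1 - fw (hw x)))
        (fs (hs x) + 0 * (g x - fs (hs x))) := by
      rw [show fs (hs x) + 0 * (g x - fs (hs x)) = fs (hs x) by ring]
      exact hasDerivAt_klBin (hqI x) (haI x)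
    exact (houter.comp 0 hinner).const_mul (μ x)
  -- φ 0 is a minimum on [0,1]
  have hφ0 : φ 0 = ∑ x, μ x * klBin (fs (hs x)) (fw (hw x)) := by
    rw [hφ]; simp
  have hmin' : ∀ t ∈ Set.Icc (0:ℝ) 1, φ 0 ≤ φ t := by
    intro t ht
    have hmem : ((1 - t) • fs + t • fstar) ∈ 𝓕 :=
      h𝓕conv hfs hfstar (by linarith [ht.2]) ht.1 (by ring)
    have hb : BddBelow (Set.range fun f : 𝓕 =>
        ∑ x, μ x * klBin ((f : (Fin ds → ℝ) → ℝ) (hs x)) (fw (hw x))) := by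
      refine ⟨0, ?_⟩
      rintro y ⟨f, rfl⟩
      exact Finset.sum_nonneg fun x _ =>
        mul_nonneg (hμpos x).le (klBin_nonneg (h𝓕mem f f.2 (hs x)) (hqI x))
    have hle := ciInf_le hb (⟨(1 - t) • fs + t • fstar, hmem⟩ : 𝓕)
    calc φ 0 = ⨅ f : 𝓕, ∑ x, μ x * klBin ((f : (Fin ds → ℝ) → ℝ) (hs x)) (fw (hw x)) := by
          rw [hφ0, hmin]
      _ ≤ ∑ x, μ x * klBin (((1 - t) • fs + t • fstar) (hs x)) (fw (hw x)) := hle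
      _ = φ t := by
          rw [hφ]
          refine Finset.sum_congr rfl fun x _ => ?_
          have : ((1 - t) • fs + t • fstar) (hs x) = fs (hs x) + t * (g x - fs (hs x)) := by
            simp [Pi.add_apply, Pi.smul_apply, smul_eq_mul, ← hgf x]
            ring
          rw [this]
  -- hence S ≥ 0
  have hS0 : 0 ≤ S := by
    have hd := hderiv.hasDerivWithinAt (s := Set.Ioi (0:ℝ))
    rw [hasDerivWithinAt_iff_tendsto_slope] at hd
    have hfilter : Set.Ioi (0:ℝ) \ {0} = Set.Ioi 0 := by
      apply Set.diff_singleton_eq_self; simp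
    rw [hfilter] at hd
    refine ge_of_tendsto hd ?_
    filter_upwards [Ioc_mem_nhdsGT_of_mem (by norm_num : (0:ℝ) ∈ Set.Ico (0:ℝ) 1)] with t ht
    have h1 := hmin' t ⟨ht.1.le, ht.2⟩
    have h2 : (0:ℝ) < t - 0 := by simpa using ht.1
    rw [slope_def_field]
    exact div_nonneg (by linarith) (by linarith)
  -- final identity
  have key : ∑ x, μ x * xeBin (g x) (fw (hw x))
      - ∑ x, μ x * klBin (fs (hs x)) (fw (hw x))
      - ∑ x, μ x * xeBin (g x) (fs (hs x)) = S := by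
    rw [hSdef, ← Finset.sum_sub_distrib, ← Finset.sum_sub_distrib]
    refine Finset.sum_congr rfl fun x _ => ?_
    have h1 := haI x; have h2 := hqI x
    rw [xeBin, xeBin, klBin, Real.log_div h1.1.ne' h2.1.ne',
      Real.log_div (by linarith [h1.2] : (1:ℝ) - fs (hs x) ≠ 0)
        (by linarith [h2.2] : (1:ℝ) - fw (hw x) ≠ 0)]
    ring
  linarith
end
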